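/- arXiv:0806.4728 — 6 statements merged into one kernel-verified Lean document; each statement's English description precedes it below -/
import Mathlib

section
/- The modified addition α ⊕ β := α + β + α ∧ dβ on odd-degree differential forms is associative. -/
/-!  Abstract model of complex differential forms on a smooth manifold `M`:
`E` plays the role of the even-degree forms (a commutative ring under wedge),
`O` the odd-degree forms (an `E`-module, the action being the wedge product
of an even by an odd form), and `d : O →+ E` the exterior derivative from odd
to even forms.  `α ∧ dβ` is written `d β • α`. -/

variable {E O : Type*} [CommRing E] [AddCommGroup O] [Module E O]

/-- The modified addition `α ⊕ β := α + β + α ∧ dβ` on odd-degree forms. -/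
def mAdd (d : O →+ E) (α β : O) : O := α + β + d β • α

/-! Writing `α ⊕ β = β + (1 + dβ) • α`, the Leibniz rule makes `x ↦ 1 + dx` multiplicative,
`1 + d(α ⊕ β) = (1 + dα)(1 + dβ)`. Both bracketings of `α ⊕ β ⊕ γ` then expand to
`γ + (1 + dγ) • β + (1 + dβ)(1 + dγ) • α`. -/

theorem mAdd_eq_add_smul (d : O →+ E) (α β : O) : mAdd d α β = β + (1 + d β) • α := by
  rw [mAdd, add_smul, one_smul]
  abel

theorem one_add_map_mAdd (d : O →+ E) (hLeib : ∀ x y : O, d (d y • x) = d x * d y) (α β : O) :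
    1 + d (mAdd d α β) = (1 + d α) * (1 + d β) := by
  rw [mAdd, map_add, map_add, hLeib]
  ring

/-- `hLeib` is the Leibniz rule `d(α ∧ dβ) = dα ∧ dβ`, valid since `α` has odd degree and `dβ`
is closed. -/
theorem mAdd_assoc (d : O →+ E)
    (hLeib : ∀ x y : O, d (d y • x) = d x * d y)
    (α β γ : O) :
    mAdd d (mAdd d α β) γ = mAdd d α (mAdd d β γ) :=
  calc mAdd d (mAdd d α β) γ = γ + (1 + d γ) • β + ((1 + d β) * (1 + d γ)) • α := by
        rw [mAdd_eq_add_smul, mAdd_eq_add_smul, smul_add, smul_smul, mul_comm, add_assoc]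
    _ = mAdd d α (mAdd d β γ) := by
        rw [mAdd_eq_add_smul d α, one_add_map_mAdd d hLeib, mAdd_eq_add_smul d β γ]
end

section
/- The modified opposite of α is ⊖α = −α ∧ (1 + dα)^{-1} = −∑_{j≥0} (−1)^j α ∧ (dα)^{∧j}: one has α ⊕ (⊖α) = 0 in forms modulo exact forms. -/
/-!  Abstract model of complex differential forms on a smooth manifold `M`:
`E` plays the role of the even-degree forms (a commutative ring under wedge),
`O` the odd-degree forms (an `E`-module, the action being the wedge product
of an even by an odd form), and `d : O →+ E` the exterior derivative from odd
to even forms.  `α ∧ dβ` is written `d β • α`. -/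

variable {E O : Type*} [CommRing E] [AddCommGroup O] [Module E O]

/-!
Since `dα` is nilpotent, `S = ∑ (-1)^j (dα)^j` is the inverse of `1 + dα`
(a terminating geometric series). The Leibniz rule gives `d(S α) = S dα`, so
`α ⊕ (-S α) = α - S α - S dα ∧ α = (1 - S (1 + dα)) α = 0`.
-/

open Finset

theorem alternating_geom_sum_mul_one_add_of_pow_eq_zero {R : Type*} [Ring R] {x : R} {n : ℕ}
    (hx : x ^ n = 0) : (∑ j ∈ range n, (-1 : R) ^ j * x ^ j) * (1 + x) = 1 := by
  have hneg : ∀ j, (-1 : R) ^ j * x ^ j = (-x) ^ j := fun j => (neg_pow x j).symm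
  simp only [hneg]
  rw [← sub_neg_eq_add, geom_sum_mul_neg, neg_pow, hx, mul_zero, sub_zero]

theorem map_intCast_sum_mul_pow_smul (d : O →+ E) {α : O} {x : E}
    (hd : ∀ j : ℕ, d (x ^ j • α) = x ^ (j + 1)) (f : ℕ → ℤ) (s : Finset ℕ) :
    d ((∑ j ∈ s, (f j : E) * x ^ j) • α) = (∑ j ∈ s, (f j : E) * x ^ j) * x := by
  simp only [sum_smul, map_sum, sum_mul, mul_smul, Int.cast_smul_eq_zsmul, map_zsmul, hd,
    zsmul_eq_mul, mul_assoc, pow_succ]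

theorem mAdd_neg_smul_self (d : O →+ E) {α : O} {c : E} (hc : d (c • α) = c * d α) :
    mAdd d α (-(c • α)) = (1 - c * (1 + d α)) • α := by
  rw [mAdd, map_neg, hc, neg_smul, sub_smul, one_smul, mul_add, mul_one, add_smul]
  abel

/-- `hsm` is the Leibniz rule `d(α ∧ (dα)^{∧j}) = dα ∧ (dα)^{∧j}`. -/
theorem mAdd_neg (d : O →+ E) (α : O) (n : ℕ)
    (hnil : d α ^ (n + 1) = 0)
    (hsm : ∀ j : ℕ, d (d α ^ j • α) = d α ^ (j + 1)) :
    mAdd d α (-((∑ j ∈ Finset.range (n + 1), (-1 : E) ^ j * d α ^ j) • α)) = 0 ∧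
    ∀ v : E, v * (1 + d α) = 1 →
      v • α = (∑ j ∈ Finset.range (n + 1), (-1 : E) ^ j * d α ^ j) • α := by
  set S : E := ∑ j ∈ range (n + 1), (-1 : E) ^ j * d α ^ j
  have hinv : S * (1 + d α) = 1 := alternating_geom_sum_mul_one_add_of_pow_eq_zero hnil
  have hdS : d (S • α) = S * d α := by
    simpa using map_intCast_sum_mul_pow_smul d hsm (fun j => (-1) ^ j) (range (n + 1))
  refine ⟨by rw [mAdd_neg_smul_self d hdS, hinv, sub_self, zero_smul], fun v hv => ?_⟩
  rw [left_inv_eq_right_inv hv (by rwa [mul_comm] at hinv)]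
end

section
/- Every σ ∈ Ω_{[+]}(M,ℂ) decomposes uniquely as σ = ρ ∧ θ with ρ ∈ Ω_{[+]}(M,ℂ) real and θ of modulus 1 (i.e. θ ∧ θ̄ = 1); moreover ρ and θ are closed if σ is closed. -/
/-! Since `σ` fixes `u * σ u` and this product is unipotent, it has a unique unipotent square
root `ρ` (Newton's method for `X ^ 2 - u * σ u`, whose derivative `2` is a unit), and uniqueness
forces `σ ρ = ρ`; then `θ = ρ⁻¹ * u` has modulus one. Conversely every factorization `u = ρ * θ`
of this kind has `ρ ^ 2 = u * σ u`, which gives uniqueness, and a Leibniz map killing `u` kills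
`u * σ u = ρ ^ 2`, hence `ρ` (as `2 * ρ` is a unit) and then `θ`. -/

section PolarFactorization

open Polynomial

variable {R : Type*} [CommRing R]

theorem exists_isNilpotent_and_eq_one_add_iff {y : R} :
    (∃ a : R, IsNilpotent a ∧ y = 1 + a) ↔ IsNilpotent (y - 1) :=
  ⟨fun ⟨a, ha, hy⟩ => by rwa [hy, add_sub_cancel_left], fun hy => ⟨y - 1, hy, by ring⟩⟩

theorem isUnit_of_isNilpotent_sub_one {y : R} (hy : IsNilpotent (y - 1)) : IsUnit y := by
  simpa using hy.isUnit_one_add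

theorem isNilpotent_mul_sub_one {y z : R} (hy : IsNilpotent (y - 1))
    (hz : IsNilpotent (z - 1)) : IsNilpotent (y * z - 1) := by
  rw [show y * z - 1 = (y - 1) * z + (z - 1) by ring]
  exact (Commute.all _ _).isNilpotent_add ((Commute.all _ _).isNilpotent_mul_right hy) hz

theorem existsUnique_isNilpotent_sub_one_and_sq_eq (h2 : IsUnit (2 : R)) {s : R}
    (hs : IsNilpotent (s - 1)) : ∃! r : R, IsNilpotent (r - 1) ∧ r ^ 2 = s := by
  have hP := existsUnique_nilpotent_sub_and_aeval_eq_zero (P := X ^ 2 - C s) (x := (1 : R))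
    (by simpa [← neg_sub s, -neg_sub] using hs) (by simpa [one_add_one_eq_two] using h2)
  simp only [map_sub, map_pow, aeval_X, aeval_C, Algebra.algebraMap_self, RingHom.id_apply,
    sub_eq_zero] at hP
  simpa only [← neg_sub _ (1 : R), isNilpotent_neg_iff] using hP

section Leibniz

variable {D : R →+ R} (hD : ∀ a b : R, D (a * b) = D a * b + a * D b)
include hD

theorem map_one_eq_zero_of_leibniz : D 1 = 0 := by
  simpa using hD 1 1

theorem map_eq_zero_of_map_sq_eq_zero_of_leibniz (h2 : IsUnit (2 : R)) {a : R} (ha : IsUnit a)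
    (h : D (a ^ 2) = 0) : D a = 0 := by
  have h2a : 2 * a * D a = 0 := by
    rw [sq, hD] at h
    linear_combination h
  exact (h2.mul ha).mul_right_eq_zero.mp h2a

theorem map_right_eq_zero_of_map_mul_eq_zero_of_leibniz {a b : R} (ha : IsUnit a)
    (hDa : D a = 0) (h : D (a * b) = 0) : D b = 0 := by
  rw [hD, hDa, zero_mul, zero_add] at h
  exact ha.mul_right_eq_zero.mp h

end Leibniz

theorem mul_map_mul_of_map_eq {σ : R →+* R} {ρ : R} (hρ : σ ρ = ρ) (θ : R) :
    ρ * θ * σ (ρ * θ) = ρ ^ 2 * (θ * σ θ) := by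
  rw [map_mul, hρ]; ring

def IsPolarFactorization (σ : R →+* R) (u ρ θ : R) : Prop :=
  IsNilpotent (ρ - 1) ∧ σ ρ = ρ ∧ IsNilpotent (θ - 1) ∧ θ * σ θ = 1 ∧ u = ρ * θ

namespace IsPolarFactorization

variable {σ : R →+* R} {u ρ θ : R}

theorem eq_mul (hf : IsPolarFactorization σ u ρ θ) : u = ρ * θ :=
  hf.2.2.2.2

theorem sq_eq (hf : IsPolarFactorization σ u ρ θ) : ρ ^ 2 = u * σ u := by
  obtain ⟨-, hρ, -, hθ, rfl⟩ := hf
  rw [mul_map_mul_of_map_eq hρ, hθ, mul_one]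

theorem unique (h2 : IsUnit (2 : R)) {ρ' θ' : R} (hf : IsPolarFactorization σ u ρ θ)
    (hf' : IsPolarFactorization σ u ρ' θ') : ρ = ρ' ∧ θ = θ' := by
  have hs : IsNilpotent (u * σ u - 1) := by
    rw [← hf.sq_eq, sq]
    exact isNilpotent_mul_sub_one hf.1 hf.1
  have hρ : ρ = ρ' := (existsUnique_isNilpotent_sub_one_and_sq_eq h2 hs).unique
    ⟨hf.1, hf.sq_eq⟩ ⟨hf'.1, hf'.sq_eq⟩
  subst hρ
  refine ⟨rfl, (isUnit_of_isNilpotent_sub_one hf.1).mul_left_cancel ?_⟩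
  rw [← hf.eq_mul, ← hf'.eq_mul]

theorem leibniz_eq_zero (h2 : IsUnit (2 : R)) (hf : IsPolarFactorization σ u ρ θ) {D : R →+ R}
    (hD : ∀ a b : R, D (a * b) = D a * b + a * D b) (hDσ : ∀ a : R, D (σ a) = σ (D a))
    (hDu : D u = 0) : D ρ = 0 ∧ D θ = 0 := by
  have hρ_unit := isUnit_of_isNilpotent_sub_one hf.1
  have hDρ : D ρ = 0 := by
    refine map_eq_zero_of_map_sq_eq_zero_of_leibniz hD h2 hρ_unit ?_
    rw [hf.sq_eq, hD, hDσ, hDu, map_zero, zero_mul, mul_zero, add_zero]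
  refine ⟨hDρ, map_right_eq_zero_of_map_mul_eq_zero_of_leibniz hD hρ_unit hDρ ?_⟩
  rwa [← hf.eq_mul]

end IsPolarFactorization

theorem exists_isPolarFactorization (h2 : IsUnit (2 : R)) {σ : R →+* R}
    (hσ : ∀ a : R, σ (σ a) = a) {u : R} (hu : IsNilpotent (u - 1)) :
    ∃ ρ θ : R, IsPolarFactorization σ u ρ θ := by
  have hσ_unipotent {y : R} (hy : IsNilpotent (y - 1)) : IsNilpotent (σ y - 1) := by
    simpa using hy.map σ
  have hs : IsNilpotent (u * σ u - 1) := isNilpotent_mul_sub_one hu (hσ_unipotent hu)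
  obtain ⟨ρ, ⟨hρ, hρs⟩, hρ_unique⟩ := existsUnique_isNilpotent_sub_one_and_sq_eq h2 hs
  have hσρ : σ ρ = ρ :=
    hρ_unique _ ⟨hσ_unipotent hρ, by rw [← map_pow, hρs, map_mul, hσ, mul_comm]⟩
  obtain ⟨r, rfl⟩ := isUnit_of_isNilpotent_sub_one hρ
  refine ⟨r, ↑r⁻¹ * u, hρ, hσρ, ?_, ?_, by rw [Units.mul_inv_cancel_left]⟩
  · have : ↑r⁻¹ * u - 1 = ↑r⁻¹ * ((u - 1) - (↑r - 1)) := by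
      linear_combination Units.inv_mul r
    rw [this]
    exact (Commute.all _ _).isNilpotent_mul_left ((Commute.all _ _).isNilpotent_sub hu hρ)
  · refine (r.isUnit.pow 2).mul_left_cancel ?_
    rw [← mul_map_mul_of_map_eq hσρ, Units.mul_inv_cancel_left, hρs, mul_one]

theorem existsUnique_isPolarFactorization (h2 : IsUnit (2 : R)) {σ : R →+* R}
    (hσ : ∀ a : R, σ (σ a) = a) {u : R} (hu : IsNilpotent (u - 1)) :
    ∃! p : R × R, IsPolarFactorization σ u p.1 p.2 := by
  obtain ⟨ρ, θ, hf⟩ := exists_isPolarFactorization h2 hσ hu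
  refine ⟨(ρ, θ), hf, fun p hp => ?_⟩
  obtain ⟨hρ, hθ⟩ := hf.unique h2 hp
  exact Prod.ext hρ.symm hθ.symm

end PolarFactorization

theorem unique_real_modulus_one_factorization {R : Type*} [CommRing R]
    (h2 : Invertible (2 : R)) (σ : R →+* R) (hσ : ∀ a : R, σ (σ a) = a)
    (x : R) (hx : IsNilpotent x) :
    (∃! p : R × R,
      (∃ a : R, IsNilpotent a ∧ p.1 = 1 + a) ∧ σ p.1 = p.1 ∧
      (∃ b : R, IsNilpotent b ∧ p.2 = 1 + b) ∧ p.2 * σ p.2 = 1 ∧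
      1 + x = p.1 * p.2) ∧
    (∀ p : R × R,
      ((∃ a : R, IsNilpotent a ∧ p.1 = 1 + a) ∧ σ p.1 = p.1 ∧
       (∃ b : R, IsNilpotent b ∧ p.2 = 1 + b) ∧ p.2 * σ p.2 = 1 ∧
       1 + x = p.1 * p.2) →
      ∀ D : R →+ R, (∀ a b : R, D (a * b) = D a * b + a * D b) →
        (∀ a : R, D (σ a) = σ (D a)) → D x = 0 →
        D p.1 = 0 ∧ D p.2 = 0) := by
  have h2' : IsUnit (2 : R) := isUnit_of_invertible 2
  have hu : IsNilpotent (1 + x - 1) := by rwa [add_sub_cancel_left]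
  simp only [exists_isNilpotent_and_eq_one_add_iff]
  refine ⟨existsUnique_isPolarFactorization h2' hσ hu, fun p hp D hD hDσ hDx => ?_⟩
  refine IsPolarFactorization.leibniz_eq_zero h2' hp hD hDσ ?_
  rw [map_add, map_one_eq_zero_of_leibniz hD, hDx, zero_add]
end

section
/- For every odd form α modulo exact forms, there exists a unique β (the special half of α) with β ⊕ β = α, where ⊕ is the modified addition. -/
/-!  Abstract model of complex differential forms on a smooth manifold `M`:
`E` plays the role of the even-degree forms (a commutative ring under wedge),
`O` the odd-degree forms (an `E`-module, the action being the wedge product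
of an even by an odd form), `d : O →+ E` the exterior derivative from odd to
even forms and `δ : E →+ O` the exterior derivative from even to odd forms
(so exact odd forms are those in the range of `δ`).  `α ∧ dβ` is written
`d β • α`, and `Λ = Ω^odd/dΩ^even` is modelled by working modulo `δ`-images. -/

variable {E O : Type*} [CommRing E] [AddCommGroup O] [Module E O]

/-!
Put `Φ β := ½ (α - dβ ∧ β)`, so that `β ⊕ β = α` says exactly that `β` is a fixed point of `Φ`.
Let `F k` be the additive group generated by the forms `dγ₁ ∧ ⋯ ∧ dγₖ ∧ η`; it vanishes for
`k = N`. Since `δ` kills products of exact forms, `d` of such a form is again a product of `k + 1`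
exact factors, so `Φ` maps pairs congruent modulo `F k + im δ` to pairs congruent modulo
`F (k + 1) + im δ`. Hence `Φ^[N] 0` is a fixed point modulo `im δ`, and any two fixed points
modulo `im δ` agree modulo `F k + im δ` for every `k ≤ N`, i.e. modulo `im δ`. This is the
degree-by-degree construction of the half, with the degree replaced by the number of exact factors.
-/

section FixedPoint

variable {G : Type*} [AddCommGroup G]

def IsFiltrationContracting (F : ℕ → AddSubgroup G) (Φ : G → G) : Prop :=
  ∀ k x y, x - y ∈ F k → Φ x - Φ y ∈ F (k + 1)

namespace IsFiltrationContracting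

variable {F : ℕ → AddSubgroup G} {Φ : G → G}

theorem map_iterate_sub_iterate_mem (hΦ : IsFiltrationContracting F Φ) (hF0 : F 0 = ⊤)
    (x : G) (n : ℕ) : Φ (Φ^[n] x) - Φ^[n] x ∈ F n := by
  induction n with
  | zero => simp [hF0]
  | succ n ih =>
    rw [Function.iterate_succ_apply']
    exact hΦ n _ _ ih

theorem sub_mem_of_sub_mem (hΦ : IsFiltrationContracting F Φ) (hF0 : F 0 = ⊤)
    (hF : Antitone F) {n : ℕ} {x y : G} (hx : Φ x - x ∈ F n) (hy : Φ y - y ∈ F n) :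
    x - y ∈ F n := by
  suffices ∀ k ≤ n, x - y ∈ F k from this n le_rfl
  intro k hk
  induction k with
  | zero => simp [hF0]
  | succ k ih =>
    have hxy : x - y = -(Φ x - x) + (Φ x - Φ y) + (Φ y - y) := by abel
    rw [hxy]
    exact add_mem (add_mem (neg_mem (hF hk hx)) (hΦ k x y (ih (by omega)))) (hF hk hy)

end IsFiltrationContracting

end FixedPoint

section Leibniz

variable {δ : E →+ O} (hδmul : ∀ a b : E, δ (a * b) = a • δ b + b • δ a)
include hδmul

theorem map_mul_of_leibniz_of_map_eq_zero {a : E} (ha : δ a = 0) (b : E) : δ (a * b) = a • δ b := by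
  rw [hδmul, ha, smul_zero, add_zero]

theorem map_one_eq_zero_of_leibniz_s12 : δ 1 = 0 := by
  simpa using hδmul 1 1

theorem map_prod_eq_zero_of_leibniz {ι : Type*} (s : Finset ι) (g : ι → E)
    (hg : ∀ i ∈ s, δ (g i) = 0) : δ (∏ i ∈ s, g i) = 0 :=
  Finset.prod_induction g (fun a => δ a = 0)
    (fun a b ha hb => by rw [map_mul_of_leibniz_of_map_eq_zero hδmul ha, hb, smul_zero])
    (map_one_eq_zero_of_leibniz_s12 hδmul) hg

theorem map_invOf_two_eq_zero_of_leibniz [Invertible (2 : E)] : δ (⅟2) = 0 := by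
  have h2 : δ 2 = 0 := by
    rw [← one_add_one_eq_two, map_add, map_one_eq_zero_of_leibniz_s12 hδmul, add_zero]
  have h := hδmul 2 (⅟2)
  rw [mul_invOf_self, map_one_eq_zero_of_leibniz_s12 hδmul, h2, smul_zero, add_zero] at h
  rw [← one_smul E (δ (⅟2)), ← invOf_mul_self (2 : E), mul_smul, ← h, smul_zero]

end Leibniz

section Filtration

variable (d : O →+ E)

def dFiltration (k : ℕ) : AddSubgroup O :=
  AddSubgroup.closure {x | ∃ (f : Fin k → O) (y : O), (∏ i, d (f i)) • y = x}

variable {d}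

theorem map_mem_dFiltration {k l : ℕ} (g : O →+ O)
    (hg : ∀ (f : Fin k → O) (y : O), g ((∏ i, d (f i)) • y) ∈ dFiltration d l)
    {x : O} (hx : x ∈ dFiltration d k) : g x ∈ dFiltration d l := by
  rw [← AddSubgroup.mem_comap]
  refine (AddSubgroup.closure_le _).2 ?_ hx
  rintro _ ⟨f, y, rfl⟩
  exact hg f y

theorem prod_smul_mem_dFiltration {k : ℕ} (f : Fin k → O) (y : O) :
    (∏ i, d (f i)) • y ∈ dFiltration d k :=
  AddSubgroup.subset_closure ⟨f, y, rfl⟩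

variable (d) in
theorem dFiltration_zero : dFiltration d 0 = ⊤ :=
  eq_top_iff.2 fun x _ => by simpa using prod_smul_mem_dFiltration (d := d) Fin.elim0 x

variable (d) in
theorem dFiltration_antitone : Antitone (dFiltration d) := by
  refine antitone_nat_of_succ_le fun k x hx => ?_
  refine map_mem_dFiltration (AddMonoidHom.id O) (fun f y => ?_) hx
  rw [AddMonoidHom.id_apply, Fin.prod_univ_castSucc, mul_smul]
  exact prod_smul_mem_dFiltration _ _

theorem dFiltration_eq_bot {N : ℕ} (hnilp : ∀ (f : Fin N → O) (x : O), (∏ i, d (f i)) • x = 0) :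
    dFiltration d N = ⊥ :=
  AddSubgroup.closure_eq_bot_iff.2 fun _ ⟨f, y, hfy⟩ => hfy ▸ hnilp f y

theorem smul_mem_dFiltration {k : ℕ} (e : E) {x : O} (hx : x ∈ dFiltration d k) :
    e • x ∈ dFiltration d k := by
  refine map_mem_dFiltration (DistribSMul.toAddMonoidHom O e) (fun f y => ?_) hx
  rw [DistribSMul.toAddMonoidHom_apply, smul_comm]
  exact prod_smul_mem_dFiltration _ _

theorem d_smul_mem_dFiltration_succ {k : ℕ} (b : O) {x : O} (hx : x ∈ dFiltration d k) :
    d b • x ∈ dFiltration d (k + 1) := by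
  refine map_mem_dFiltration (DistribSMul.toAddMonoidHom O (d b)) (fun f y => ?_) hx
  rw [DistribSMul.toAddMonoidHom_apply, ← mul_smul]
  simpa [Fin.prod_univ_succ] using prod_smul_mem_dFiltration (Fin.cons b f) y

theorem smul_d_mem_dFiltration_succ {δ : E →+ O} (hdδ : ∀ x : O, δ (d x) = 0)
    (hsm : ∀ (e : E) (x : O), δ e = 0 → d (e • x) = e * d x)
    (hδmul : ∀ a b : E, δ (a * b) = a • δ b + b • δ a)
    {k : ℕ} {x : O} (hx : x ∈ dFiltration d k) (y : O) :
    d x • y ∈ dFiltration d (k + 1) := by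
  refine map_mem_dFiltration (((smulAddHom E O).flip y).comp d) (fun f z => ?_) hx
  have hprod : δ (∏ i, d (f i)) = 0 :=
    map_prod_eq_zero_of_leibniz hδmul _ _ fun i _ => hdδ (f i)
  rw [AddMonoidHom.comp_apply, hsm _ _ hprod, AddMonoidHom.flip_apply, smulAddHom_apply]
  simpa [Fin.prod_univ_castSucc, mul_smul] using prod_smul_mem_dFiltration (Fin.snoc f z) y

end Filtration

section SpecialHalf

variable {d : O →+ E} [Invertible (2 : E)]

variable (d) in
def halfStep (α β : O) : O := ⅟(2 : E) • (α - d β • β)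

variable {δ : E →+ O} (hδmul : ∀ a b : E, δ (a * b) = a • δ b + b • δ a)
include hδmul

theorem exists_mAdd_self_eq_iff (α β : O) :
    (∃ e : E, mAdd d β β = α + δ e) ↔ halfStep d α β - β ∈ δ.range := by
  have h2 : (2 : E) • (β - halfStep d α β) = mAdd d β β - α := by
    rw [halfStep, smul_sub, smul_smul, mul_invOf_self, one_smul, mAdd, two_smul]
    abel
  simp only [AddMonoidHom.mem_range]
  constructor
  · rintro ⟨e, he⟩
    refine ⟨-(⅟(2 : E) * e), ?_⟩
    rw [map_neg, map_mul_of_leibniz_of_map_eq_zero hδmul (map_invOf_two_eq_zero_of_leibniz hδmul),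
      ← sub_eq_iff_eq_add'.2 he, ← h2, smul_smul, invOf_mul_self, one_smul, neg_sub]
  · rintro ⟨e, he⟩
    refine ⟨-(e + e), ?_⟩
    rw [← sub_eq_iff_eq_add', ← h2, ← neg_sub, ← he, map_neg, map_add, two_smul, neg_add]

theorem isFiltrationContracting_halfStep (hδd : ∀ e : E, d (δ e) = 0)
    (hdδ : ∀ x : O, δ (d x) = 0) (hsm : ∀ (e : E) (x : O), δ e = 0 → d (e • x) = e * d x)
    (α : O) :
    IsFiltrationContracting (fun k => dFiltration d k ⊔ δ.range) (halfStep d α) := by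
  intro k x y hxy
  obtain ⟨f, hf, _, ⟨u, rfl⟩, hfu⟩ := AddSubgroup.mem_sup.1 hxy
  obtain rfl : x = y + f + δ u := by rw [add_assoc, hfu]; abel
  have hdx : d (y + f + δ u) = d y + d f := by rw [map_add, map_add, hδd, add_zero]
  refine AddSubgroup.mem_sup.2
    ⟨-⅟(2 : E) • (d f • (y + f + δ u) + d y • f), ?_, δ (-(⅟(2 : E) * (d y * u))), ⟨_, rfl⟩, ?_⟩
  · exact smul_mem_dFiltration _ <| add_mem (smul_d_mem_dFiltration_succ hdδ hsm hδmul hf _)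
      (d_smul_mem_dFiltration_succ _ hf)
  · rw [map_neg, map_mul_of_leibniz_of_map_eq_zero hδmul (map_invOf_two_eq_zero_of_leibniz hδmul),
      map_mul_of_leibniz_of_map_eq_zero hδmul (hdδ y), halfStep, halfStep, hdx]
    module

end SpecialHalf

/-- Special division by 2: every `α ∈ Λ` has a unique special half `β` with
`β ⊕ β = α` in `Λ` (i.e. up to exact forms).  The hypotheses are the usual
rules of graded differential calculus: `d² = 0` (`hδd`, `hdδ`), the Leibniz
rules `hsm` and `hδmul`, invertibility of `2`, and nilpotency of products of
`N` positive-degree forms (true on a finite-dimensional manifold). -/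
theorem special_half_exists_unique (d : O →+ E) (δ : E →+ O) (N : ℕ)
    (h2 : Invertible (2 : E))
    (hδd : ∀ e : E, d (δ e) = 0)
    (hdδ : ∀ x : O, δ (d x) = 0)
    (hsm : ∀ (e : E) (x : O), δ e = 0 → d (e • x) = e * d x)
    (hδmul : ∀ a b : E, δ (a * b) = a • δ b + b • δ a)
    (hnilp : ∀ (f : Fin N → O) (x : O), (∏ i, d (f i)) • x = 0)
    (α : O) :
    ∃ β : O, (∃ e : E, mAdd d β β = α + δ e) ∧
      ∀ β' : O, (∃ e : E, mAdd d β' β' = α + δ e) → ∃ e : E, β' = β + δ e := by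
  let F : ℕ → AddSubgroup O := fun k => dFiltration d k ⊔ δ.range
  have hF0 : F 0 = ⊤ := by simp [F, dFiltration_zero]
  have hFN : F N = δ.range := by simp [F, dFiltration_eq_bot hnilp]
  have hF : Antitone F := fun _ _ hkl => sup_le_sup_right (dFiltration_antitone d hkl) _
  have hΦ : IsFiltrationContracting F (halfStep d α) :=
    isFiltrationContracting_halfStep hδmul hδd hdδ hsm α
  have hfix : ∀ β, (∃ e, mAdd d β β = α + δ e) ↔ halfStep d α β - β ∈ F N := fun β => by
    rw [hFN]; exact exists_mAdd_self_eq_iff hδmul α β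
  have hβ := hΦ.map_iterate_sub_iterate_mem hF0 0 N
  refine ⟨_, (hfix _).2 hβ, fun β' hβ' => ?_⟩
  have hβ'β := hΦ.sub_mem_of_sub_mem hF0 hF ((hfix β').1 hβ') hβ
  obtain ⟨e, he⟩ := AddMonoidHom.mem_range.1 (hFN ▸ hβ'β)
  exact ⟨e, by rw [he, add_sub_cancel]⟩
end

section
/- Every α ∈ Λ decomposes uniquely as α = β ⊕ γ with β real and γ special imaginary (γ ⊕ γ̄ = 0), namely β = ½̂(α ⊕ ᾱ) and γ = ½̂(α ⊖ ᾱ). -/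
/-! Once `(Λ, ⊕)` is recognised as an abelian group, uniqueness of the special half makes
`½̂` additive and makes it commute with every additive endomorphism, in particular with
conjugation. A decomposition `α = β ⊕ γ` with `β̄ = β` and `γ̄ = ⊖γ` then forces
`α ⊕ ᾱ = β ⊕ β` and `α ⊖ ᾱ = γ ⊕ γ`, which is both the uniqueness and, read backwards, the
existence of the decomposition. -/

abbrev AddCommGroup.ofRightAxioms {G : Type*} (op : G → G → G) (zero : G) (neg : G → G)
    (hcomm : ∀ a b, op a b = op b a) (hassoc : ∀ a b c, op (op a b) c = op a (op b c))
    (hzero : ∀ a, op a zero = a) (hneg : ∀ a, op a (neg a) = zero) : AddCommGroup G :=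
  letI : Add G := ⟨op⟩
  letI : Zero G := ⟨zero⟩
  letI : Neg G := ⟨neg⟩
  { AddGroup.ofRightAxioms hassoc hzero hneg with add_comm := hcomm }

section UniqueHalf

variable {G : Type*} [AddCommGroup G] {half : G → G}

theorem half_add_self (hhalf_unique : ∀ a b, b + b = a → b = half a) (a : G) :
    half (a + a) = a :=
  (hhalf_unique _ a rfl).symm

theorem half_add (hhalf : ∀ a, half a + half a = a)
    (hhalf_unique : ∀ a b, b + b = a → b = half a) (a b : G) :
    half (a + b) = half a + half b :=
  (hhalf_unique _ _ <| by rw [add_add_add_comm, hhalf, hhalf]).symm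

theorem half_neg (hhalf : ∀ a, half a + half a = a)
    (hhalf_unique : ∀ a b, b + b = a → b = half a) (a : G) :
    half (-a) = -half a :=
  (hhalf_unique _ _ <| by rw [← neg_add, hhalf]).symm

theorem map_half (hhalf : ∀ a, half a + half a = a)
    (hhalf_unique : ∀ a b, b + b = a → b = half a) (f : G →+ G) (a : G) :
    f (half a) = half (f a) :=
  hhalf_unique _ _ <| by rw [← map_add, hhalf]

theorem half_add_add_half_sub (hhalf : ∀ a, half a + half a = a)
    (hhalf_unique : ∀ a b, b + b = a → b = half a) (a b : G) :
    half (a + b) + half (a - b) = a := by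
  rw [← half_add hhalf hhalf_unique, add_add_sub_cancel, half_add_self hhalf_unique]

end UniqueHalf

section RealImaginary

variable {G : Type*} [AddCommGroup G] {half : G → G} (conj : G →+ G)

theorem conj_half_add_conj (hconj : ∀ a, conj (conj a) = a) (hhalf : ∀ a, half a + half a = a)
    (hhalf_unique : ∀ a b, b + b = a → b = half a) (α : G) :
    conj (half (α + conj α)) = half (α + conj α) := by
  rw [map_half hhalf hhalf_unique, map_add, hconj, add_comm]

theorem half_sub_conj_add_conj (hconj : ∀ a, conj (conj a) = a)
    (hhalf : ∀ a, half a + half a = a) (hhalf_unique : ∀ a b, b + b = a → b = half a) (α : G) :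
    half (α - conj α) + conj (half (α - conj α)) = 0 := by
  rw [map_half hhalf hhalf_unique, map_sub, hconj, ← neg_sub α, half_neg hhalf hhalf_unique,
    add_neg_cancel]

theorem eq_half_of_eq_real_add_imaginary (hhalf_unique : ∀ a b, b + b = a → b = half a)
    {α β γ : G} (hβ : conj β = β) (hγ : γ + conj γ = 0) (hα : α = β + γ) :
    β = half (α + conj α) ∧ γ = half (α - conj α) := by
  have hγ' : conj γ = -γ := eq_neg_of_add_eq_zero_right hγ
  constructor <;> apply hhalf_unique <;> rw [hα, map_add, hβ, hγ'] <;> abel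

end RealImaginary

/-- Every `α ∈ Λ` decomposes uniquely as `α = β ⊕ γ` with `β` real and `γ`
special imaginary (`γ ⊕ γ̄ = 0`); namely `β = ½̂(α ⊕ ᾱ)` and `γ = ½̂(α ⊖ ᾱ)`. -/
theorem real_special_imaginary_decomposition
    {Λ : Type*} (op : Λ → Λ → Λ) (zero : Λ) (neg conj half : Λ → Λ)
    (hcomm : ∀ a b, op a b = op b a)
    (hassoc : ∀ a b c, op (op a b) c = op a (op b c))
    (hzero : ∀ a, op a zero = a)
    (hneg : ∀ a, op a (neg a) = zero)
    (hconj_op : ∀ a b, conj (op a b) = op (conj a) (conj b))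
    (hconj_invol : ∀ a, conj (conj a) = a)
    (hhalf : ∀ a, op (half a) (half a) = a)
    (hhalf_unique : ∀ a b, op b b = a → b = half a)
    (α : Λ) :
    conj (half (op α (conj α))) = half (op α (conj α)) ∧
    op (half (op α (neg (conj α)))) (conj (half (op α (neg (conj α))))) = zero ∧
    α = op (half (op α (conj α))) (half (op α (neg (conj α)))) ∧
    ∀ β γ, conj β = β → op γ (conj γ) = zero → α = op β γ →
      β = half (op α (conj α)) ∧ γ = half (op α (neg (conj α))) := by
  let := AddCommGroup.ofRightAxioms op zero neg hcomm hassoc hzero hneg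
  let conjHom : Λ →+ Λ := AddMonoidHom.mk' conj hconj_op
  exact ⟨conj_half_add_conj conjHom hconj_invol hhalf hhalf_unique α,
    half_sub_conj_add_conj conjHom hconj_invol hhalf hhalf_unique α,
    (half_add_add_half_sub hhalf hhalf_unique α (conj α)).symm,
    fun _ _ hβ hγ hα => eq_half_of_eq_real_add_imaginary conjHom hhalf_unique hβ hγ hα⟩
end

section
/- The multiplicative transgression satisfies the cocycle property: Ĉ(∇₀,∇₂) = Ĉ(∇₁,∇₂) ⊕ Ĉ(∇₀,∇₁) in Λ, where Ĉ(∇₀,∇₁) = C̃(∇₀,∇₁) ∧ P(∇₀²)^{-1}. -/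
/-!  Abstract model of complex differential forms:
`E` plays the role of the even-degree forms (a commutative ring under wedge),
`O` the odd-degree forms (an `E`-module, the action being the wedge product
of an even by an odd form), and `d : O →+ E` the exterior derivative from odd
to even forms.  `α ∧ dβ` is written `d β • α`. -/

variable {E O : Type*} [CommRing E] [AddCommGroup O] [Module E O]

/-! Normalising `t₀₁` by `u₀⁻¹` turns `1 + dĈ₀₁` into the ratio `u₀⁻¹ u₁`, and `α ⊕ β` is
`α ∧ (1 + dβ) + β`; so `Ĉ₁₂ ⊕ Ĉ₀₁ = u₁⁻¹ t₁₂ · u₀⁻¹ u₁ + u₀⁻¹ t₀₁ = u₀⁻¹ (t₁₂ + t₀₁)`. -/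

theorem mAdd_eq_one_add_smul_add (d : O →+ E) (α β : O) : mAdd d α β = (1 + d β) • α + β := by
  rw [mAdd, add_smul, one_smul, add_right_comm]

theorem one_add_map_units_inv_smul {d : O →+ E} {u v : Eˣ} {t : O}
    (hleibniz : d ((↑u⁻¹ : E) • t) = (↑u⁻¹ : E) * d t) (ht : d t = ↑v - ↑u) :
    1 + d ((↑u⁻¹ : E) • t) = (↑u⁻¹ : E) * ↑v := by
  rw [hleibniz, ht, mul_sub, Units.inv_mul, add_sub_cancel]

theorem multiplicative_transgression_cocycle_general (d : O →+ E)
    (u₀ u₁ : Eˣ) (t01 t12 t02 : O)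
    (h01 : d t01 = ↑u₁ - ↑u₀)
    (hadd : t02 = t01 + t12)
    (hsm : ∀ (u : Eˣ) (x : O), d ((↑u⁻¹ : E) • x) = (↑u⁻¹ : E) * d x) :
    (↑u₀⁻¹ : E) • t02 = mAdd d ((↑u₁⁻¹ : E) • t12) ((↑u₀⁻¹ : E) • t01) := by
  rw [mAdd_eq_one_add_smul_add, one_add_map_units_inv_smul (hsm u₀ t01) h01, smul_smul,
    Units.mul_inv_cancel_right, hadd, smul_add, add_comm]

/-- Cocycle property of the multiplicative transgression
`Ĉ(∇₀,∇₁) = C̃(∇₀,∇₁) ∧ P(∇₀²)⁻¹`: with `uᵢ = P(∇ᵢ²)` closed units and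
`tᵢⱼ = C̃(∇ᵢ,∇ⱼ)` satisfying `d tᵢⱼ = uⱼ − uᵢ` and the additivity
`t₀₂ = t₀₁ + t₁₂`, one has `Ĉ(∇₀,∇₂) = Ĉ(∇₁,∇₂) ⊕ Ĉ(∇₀,∇₁)`.
The hypothesis `hsm` is the Leibniz rule `d(u⁻¹ ∧ x) = u⁻¹ ∧ dx` for the
closed forms `uᵢ⁻¹`. -/
theorem multiplicative_transgression_cocycle (d : O →+ E)
    (u₀ u₁ u₂ : Eˣ) (t01 t12 t02 : O)
    (h01 : d t01 = ↑u₁ - ↑u₀)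
    (h12 : d t12 = ↑u₂ - ↑u₁)
    (hadd : t02 = t01 + t12)
    (hsm : ∀ (u : Eˣ) (x : O), d ((↑u⁻¹ : E) • x) = (↑u⁻¹ : E) * d x) :
    (↑u₀⁻¹ : E) • t02 = mAdd d ((↑u₁⁻¹ : E) • t12) ((↑u₀⁻¹ : E) • t01) :=
  multiplicative_transgression_cocycle_general d u₀ u₁ t01 t12 t02 h01 hadd hsm
end
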